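/- The unique differentiable solution v₂ of the Volterra equation v₂(t) + w² ∫₀ᵗ ds ∫₀ˢ v(s−s₁) v₂(s₁) ds₁ = c (for a constant c), where v(t) = ∫_{−2w}^{2w} e^{itλ} ρ_sc(λ) dλ, is v₂(t) = c·v(t). -/

import Mathlib

open MeasureTheory intervalIntegral

/-- The semicircle density with parameter `w`. -/
noncomputable def rhoSC (w x : ℝ) : ℝ :=
  (2 * Real.pi * w ^ 2)⁻¹ * Real.sqrt (max 0 (4 * w ^ 2 - x ^ 2))

/-- `v(t) = ∫ e^{itλ} ρ_sc(λ) dλ`, the Fourier transform of the semicircle density. -/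
noncomputable def vSC (w t : ℝ) : ℂ :=
  ∫ x in (-(2 * w))..(2 * w), Complex.exp (Complex.I * t * x) * (rhoSC w x : ℂ)

/-!
Write `v(t) = ∑ iⁿ mₙ tⁿ / n!`, where `mₙ` are the semicircle moments. The substitution
`x = 2w sin θ` and the Wallis recursion give `m_{2k+1} = 0` and `m_{2k} = Cat(k) w^{2k}`, so the
Catalan recursion reads `m_{n+2} = w² ∑_{i+j=n} mᵢ mⱼ`.
Since `∫₀ˢ (s-u)ʲ/j! · uᵏ/k! du = s^{j+k+1}/(j+k+1)!`, integrating the Cauchy product termwise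
turns this recursion into the fixed-point identity `v + w² ∫₀ᵗ∫₀ˢ v(s-u) v(u) = 1`. Hence
`u = v₂ - c v` solves the homogeneous equation `u + w² ∫₀ᵗ∫₀ˢ v(s-u) u = 0`; as `|v| ≤ 1`,
iterating the resulting Gronwall inequality bounds `|u(t)|` by `A (wt)^{2n}/(2n)!` for every `n`.
-/

open Finset Real Filter Topology
open scoped Nat

lemma continuous_rhoSC (w : ℝ) : Continuous (rhoSC w) := by
  unfold rhoSC; fun_prop

lemma rhoSC_nonneg (w x : ℝ) : 0 ≤ rhoSC w x := by
  unfold rhoSC; positivity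

noncomputable def mSC (w : ℝ) (n : ℕ) : ℝ :=
  ∫ x in (-(2 * w))..(2 * w), x ^ n * rhoSC w x

lemma integral_sin_pow_add_two_pi_div_two (n : ℕ) :
    ∫ θ in -(π / 2)..π / 2, sin θ ^ (n + 2) =
      (n + 1) / (n + 2) * ∫ θ in -(π / 2)..π / 2, sin θ ^ n := by
  simp [integral_sin_pow]

lemma mSC_eq_integral_sin_pow_mul_cos_sq {w : ℝ} (hw : 0 < w) (n : ℕ) :
    mSC w n = (2 * w) ^ (n + 2) / (2 * π * w ^ 2) *
      ∫ θ in -(π / 2)..π / 2, sin θ ^ n * cos θ ^ 2 := by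
  have hsubst := intervalIntegral.integral_comp_mul_deriv (a := -(π / 2)) (b := π / 2)
    (f := fun θ => 2 * w * sin θ) (f' := fun θ => 2 * w * cos θ)
    (g := fun x => x ^ n * rhoSC w x)
    (fun θ _ => by simpa using (hasDerivAt_sin θ).const_mul (2 * w))
    (by fun_prop) (by have := continuous_rhoSC w; fun_prop)
  simp only [sin_neg, sin_pi_div_two, mul_neg, mul_one] at hsubst
  rw [mSC, ← hsubst, ← intervalIntegral.integral_const_mul]
  refine intervalIntegral.integral_congr fun θ hθ => ?_
  rw [Set.uIcc_of_le (by linarith [pi_pos])] at hθ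
  have hcos : 0 ≤ cos θ := cos_nonneg_of_mem_Icc hθ
  have hrho : rhoSC w (2 * w * sin θ) = (2 * π * w ^ 2)⁻¹ * (2 * w * cos θ) := by
    rw [rhoSC, show 4 * w ^ 2 - (2 * w * sin θ) ^ 2 = (2 * w * cos θ) ^ 2 by
      linear_combination -4 * w ^ 2 * sin_sq_add_cos_sq θ,
      max_eq_right (by positivity), sqrt_sq (by positivity)]
  simp only [Function.comp, hrho]
  ring

lemma mSC_eq_integral_sin_pow {w : ℝ} (hw : 0 < w) (n : ℕ) :
    mSC w n = (2 * w) ^ (n + 2) / (2 * π * w ^ 2 * (n + 2)) *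
      ∫ θ in -(π / 2)..π / 2, sin θ ^ n := by
  have hcos : ∀ θ, sin θ ^ n * cos θ ^ 2 = sin θ ^ n - sin θ ^ (n + 2) := fun θ => by
    rw [cos_sq']; ring
  simp_rw [mSC_eq_integral_sin_pow_mul_cos_sq hw, hcos]
  rw [intervalIntegral.integral_sub (Continuous.intervalIntegrable (by fun_prop) _ _)
    (Continuous.intervalIntegrable (by fun_prop) _ _),
    integral_sin_pow_add_two_pi_div_two]
  field_simp
  ring

lemma mSC_zero {w : ℝ} (hw : 0 < w) : mSC w 0 = 1 := by
  rw [mSC_eq_integral_sin_pow hw]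
  field_simp
  simp
  ring

lemma mSC_one {w : ℝ} (hw : 0 < w) : mSC w 1 = 0 := by
  simp [mSC_eq_integral_sin_pow hw]

lemma mSC_add_two {w : ℝ} (hw : 0 < w) (n : ℕ) :
    mSC w (n + 2) = 4 * w ^ 2 * (n + 1) / (n + 4) * mSC w n := by
  rw [mSC_eq_integral_sin_pow hw, mSC_eq_integral_sin_pow hw, integral_sin_pow_add_two_pi_div_two]
  field_simp
  push_cast
  ring

lemma abs_mSC_le {w : ℝ} (hw : 0 < w) (n : ℕ) : |mSC w n| ≤ (2 * w) ^ n := by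
  have hS : |∫ θ in -(π / 2)..π / 2, sin θ ^ n| ≤ π := by
    simpa [abs_of_pos pi_pos] using intervalIntegral.norm_integral_le_of_norm_le_const
      (a := -(π / 2)) (b := π / 2) (C := 1) (f := fun θ => sin θ ^ n)
      fun θ _ => by simpa using pow_le_one₀ (abs_nonneg _) (abs_sin_le_one θ)
  rw [mSC_eq_integral_sin_pow hw, abs_mul, abs_of_pos (by positivity)]
  calc _ ≤ (2 * w) ^ (n + 2) / (2 * π * w ^ 2 * (n + 2)) * π := by gcongr
    _ = (2 * w) ^ n * (2 / (n + 2)) := by field_simp; ring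
    _ ≤ (2 * w) ^ n := mul_le_of_le_one_right (by positivity)
        (div_le_one_of_le₀ (by linarith [n.cast_nonneg (α := ℝ)]) (by positivity))

lemma mSC_two_mul_add_one {w : ℝ} (hw : 0 < w) (k : ℕ) : mSC w (2 * k + 1) = 0 := by
  induction k with
  | zero => exact mSC_one hw
  | succ k ih => rw [show 2 * (k + 1) + 1 = 2 * k + 1 + 2 by ring, mSC_add_two hw, ih, mul_zero]

lemma succ_succ_mul_catalan_succ (k : ℕ) :
    (k + 2) * catalan (k + 1) = 2 * (2 * k + 1) * catalan k := by
  apply Nat.eq_of_mul_eq_mul_left k.succ_pos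
  calc (k + 1) * ((k + 2) * catalan (k + 1))
      = (k + 1) * ((k + 1 + 1) * catalan (k + 1)) := by ring
    _ = (k + 1) * (k + 1).centralBinom := by rw [succ_mul_catalan_eq_centralBinom]
    _ = 2 * (2 * k + 1) * k.centralBinom := Nat.succ_mul_centralBinom_succ k
    _ = (k + 1) * (2 * (2 * k + 1) * catalan k) := by
        rw [← succ_mul_catalan_eq_centralBinom]; ring

lemma mSC_two_mul {w : ℝ} (hw : 0 < w) (k : ℕ) : mSC w (2 * k) = catalan k * w ^ (2 * k) := by
  induction k with
  | zero => simpa using mSC_zero hw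
  | succ k ih =>
    have hcat : ((k : ℝ) + 2) * catalan (k + 1) = 2 * (2 * k + 1) * catalan k := by
      exact_mod_cast succ_succ_mul_catalan_succ k
    rw [show 2 * (k + 1) = 2 * k + 2 by ring, mSC_add_two hw, ih,
      show (catalan (k + 1) : ℝ) = 2 * (2 * k + 1) * catalan k / (k + 2) by
        rw [eq_div_iff (by positivity)]; linarith]
    push_cast
    field_simp
    ring

section Antidiagonal

variable {R : Type*} [CommSemiring R] {f : ℕ → R}

lemma sum_antidiagonal_two_mul_of_odd_eq_zero (hf : ∀ k, f (2 * k + 1) = 0) (k : ℕ) :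
    ∑ p ∈ antidiagonal (2 * k), f p.1 * f p.2 =
      ∑ p ∈ antidiagonal k, f (2 * p.1) * f (2 * p.2) := by
  refine (sum_of_injOn (fun p : ℕ × ℕ => (2 * p.1, 2 * p.2)) ?_ ?_ ?_ fun _ _ => rfl).symm
  · intro p _ q _ h
    simp only [Prod.mk.injEq] at h
    exact Prod.ext (by omega) (by omega)
  · intro p hp
    simp only [mem_coe, HasAntidiagonal.mem_antidiagonal] at hp ⊢
    omega
  · rintro ⟨i, j⟩ hij hnot
    rw [HasAntidiagonal.mem_antidiagonal] at hij
    dsimp only at hij ⊢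
    obtain ⟨l, rfl | rfl⟩ := Nat.even_or_odd' i
    · refine absurd ⟨(l, k - l), ?_, ?_⟩ hnot
      · simp only [mem_coe, HasAntidiagonal.mem_antidiagonal]; omega
      · simp only [Prod.mk.injEq, true_and]; omega
    · rw [hf, zero_mul]

lemma sum_antidiagonal_two_mul_add_one_of_odd_eq_zero (hf : ∀ k, f (2 * k + 1) = 0) (k : ℕ) :
    ∑ p ∈ antidiagonal (2 * k + 1), f p.1 * f p.2 = 0 := by
  refine sum_eq_zero fun ⟨i, j⟩ hij => ?_
  rw [HasAntidiagonal.mem_antidiagonal] at hij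
  obtain ⟨l, rfl | rfl⟩ := Nat.even_or_odd' i
  · rw [show j = 2 * (k - l) + 1 by omega, hf, mul_zero]
  · rw [hf, zero_mul]

end Antidiagonal

lemma mSC_add_two_eq_sum {w : ℝ} (hw : 0 < w) (n : ℕ) :
    mSC w (n + 2) = w ^ 2 * ∑ p ∈ antidiagonal n, mSC w p.1 * mSC w p.2 := by
  obtain ⟨k, rfl | rfl⟩ := Nat.even_or_odd' n
  · rw [sum_antidiagonal_two_mul_of_odd_eq_zero (mSC_two_mul_add_one hw),
      show 2 * k + 2 = 2 * (k + 1) by ring, mSC_two_mul hw, catalan_succ']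
    have hterm : ∀ p ∈ antidiagonal k, mSC w (2 * p.1) * mSC w (2 * p.2) =
        (catalan p.1 * catalan p.2 : ℕ) * w ^ (2 * k) := by
      intro p hp
      rw [HasAntidiagonal.mem_antidiagonal] at hp
      rw [mSC_two_mul hw, mSC_two_mul hw, ← hp]
      push_cast
      ring
    rw [sum_congr rfl hterm, ← sum_mul, ← Nat.cast_sum]
    ring
  · rw [sum_antidiagonal_two_mul_add_one_of_odd_eq_zero (mSC_two_mul_add_one hw),
      show 2 * k + 1 + 2 = 2 * (k + 1) + 1 by ring, mSC_two_mul_add_one hw, mul_zero]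

lemma integral_pow_div_factorial (s : ℝ) (m : ℕ) :
    ∫ x in (0 : ℝ)..s, x ^ m / m ! = s ^ (m + 1) / (m + 1)! := by
  rw [intervalIntegral.integral_div, integral_pow, Nat.factorial_succ]
  push_cast
  field_simp
  simp

lemma integral_sub_pow_mul_pow_div_factorial (s : ℝ) (j k : ℕ) :
    ∫ u in (0 : ℝ)..s, (s - u) ^ j / j ! * (u ^ k / k !) = s ^ (j + k + 1) / (j + k + 1)! := by
  induction j generalizing k with
  | zero =>
    simp only [pow_zero, Nat.factorial_zero, Nat.cast_one, div_one, one_mul, zero_add]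
    exact integral_pow_div_factorial s k
  | succ j ih =>
    have hU : ∀ u ∈ Set.uIcc 0 s, HasDerivAt (fun u => (s - u) ^ (j + 1) / (j + 1)!)
        (-((s - u) ^ j / j !)) u := fun u _ => by
      refine ((((hasDerivAt_id u).const_sub s).pow (j + 1)).div_const ((j + 1)! : ℝ)).congr_deriv ?_
      rw [Nat.factorial_succ]
      push_cast
      field_simp
      simp
    have hV : ∀ u ∈ Set.uIcc 0 s, HasDerivAt (fun u : ℝ => u ^ (k + 1) / (k + 1)!)
        (u ^ k / k !) u := fun u _ => by
      refine ((hasDerivAt_pow (k + 1) u).div_const ((k + 1)! : ℝ)).congr_deriv ?_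
      rw [Nat.factorial_succ]
      push_cast
      field_simp
    have hparts := intervalIntegral.integral_mul_deriv_eq_deriv_mul hU hV
      (Continuous.intervalIntegrable (by fun_prop) _ _)
      (Continuous.intervalIntegrable (by fun_prop) _ _)
    simp only [sub_self, ne_eq, Nat.add_eq_zero_iff, one_ne_zero, and_false,
      not_false_eq_true, zero_pow, zero_div, zero_mul, mul_zero, sub_zero, neg_mul,
      intervalIntegral.integral_neg, sub_neg_eq_add, zero_add] at hparts
    rw [hparts, ih, show j + (k + 1) + 1 = j + 1 + k + 1 by ring]

lemma abs_le_abs_of_mem_uIoc_zero {s u : ℝ} (hu : u ∈ Set.uIoc 0 s) :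
    |u| ≤ |s| ∧ |s - u| ≤ |s| := by
  rcases Set.mem_uIoc.mp hu with h | h <;> constructor <;> rw [abs_le] <;> constructor <;>
    cases abs_cases s <;> linarith

section ExpSeries

variable {R : ℝ} {a b c : ℕ → ℂ}

lemma nonneg_of_forall_norm_le_pow (ha : ∀ n, ‖a n‖ ≤ R ^ n) : 0 ≤ R :=
  (norm_nonneg _).trans (by simpa using ha 1)

lemma norm_mul_pow_div_factorial_le (ha : ∀ n, ‖a n‖ ≤ R ^ n) {x r : ℝ} (hx : |x| ≤ r) (n : ℕ) :
    ‖a n * (x : ℂ) ^ n / (n ! : ℂ)‖ ≤ (R * r) ^ n / n ! := by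
  have hR := nonneg_of_forall_norm_le_pow ha
  rw [norm_div, norm_mul, norm_pow, Complex.norm_real, Complex.norm_natCast, mul_pow, norm_eq_abs]
  gcongr
  exact ha n

lemma summable_norm_mul_pow_div_factorial (ha : ∀ n, ‖a n‖ ≤ R ^ n) (x : ℝ) :
    Summable fun n => ‖a n * (x : ℂ) ^ n / (n ! : ℂ)‖ :=
  .of_nonneg_of_le (fun _ => norm_nonneg _) (norm_mul_pow_div_factorial_le ha le_rfl)
    (summable_pow_div_factorial _)

lemma hasSum_sum_antidiagonal_mul_pow_div_factorial {f g : ℝ → ℂ} (ha : ∀ n, ‖a n‖ ≤ R ^ n)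
    (hb : ∀ n, ‖b n‖ ≤ R ^ n) (hf : ∀ x : ℝ, HasSum (fun n => a n * (x : ℂ) ^ n / n !) (f x))
    (hg : ∀ x : ℝ, HasSum (fun n => b n * (x : ℂ) ^ n / n !) (g x)) (x y : ℝ) :
    HasSum (fun n => ∑ p ∈ antidiagonal n,
      a p.1 * (x : ℂ) ^ p.1 / p.1 ! * (b p.2 * (y : ℂ) ^ p.2 / p.2 !)) (f x * g y) := by
  have hA := summable_norm_mul_pow_div_factorial ha x
  have hB := summable_norm_mul_pow_div_factorial hb y
  have h := (summable_norm_sum_mul_antidiagonal_of_summable_norm hA hB).of_norm.hasSum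
  rwa [← tsum_mul_tsum_eq_tsum_sum_antidiagonal_of_summable_norm hA hB, (hf x).tsum_eq,
    (hg y).tsum_eq] at h

lemma norm_sum_antidiagonal_mul_le (ha : ∀ n, ‖a n‖ ≤ R ^ n) (hb : ∀ n, ‖b n‖ ≤ R ^ n) (n : ℕ) :
    ‖∑ p ∈ antidiagonal n, a p.1 * b p.2‖ ≤ (2 * R) ^ n := by
  have hR := nonneg_of_forall_norm_le_pow ha
  calc ‖∑ p ∈ antidiagonal n, a p.1 * b p.2‖
      ≤ ∑ p ∈ antidiagonal n, R ^ n := by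
        refine (norm_sum_le _ _).trans (sum_le_sum fun p hp => ?_)
        rw [norm_mul, ← HasAntidiagonal.mem_antidiagonal.mp hp, pow_add]
        exact mul_le_mul (ha _) (hb _) (norm_nonneg _) (by positivity)
    _ = (n + 1) * R ^ n := by simp
    _ ≤ 2 ^ n * R ^ n := by
        gcongr
        exact_mod_cast Nat.lt_two_pow_self
    _ = (2 * R) ^ n := (mul_pow _ _ _).symm

lemma integral_mul_pow_div_factorial_mul (α β : ℂ) (s : ℝ) (i j : ℕ) :
    ∫ u in (0 : ℝ)..s, α * ((s - u : ℝ) : ℂ) ^ i / i ! * (β * (u : ℂ) ^ j / j !) =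
      α * β * (s : ℂ) ^ (i + j + 1) / (i + j + 1)! := by
  have hcongr : ∀ u : ℝ, α * ((s - u : ℝ) : ℂ) ^ i / i ! * (β * (u : ℂ) ^ j / j !) =
      α * β * (((s - u) ^ i / i ! * (u ^ j / j !) : ℝ) : ℂ) := fun u => by
    push_cast; ring
  simp_rw [hcongr]
  rw [intervalIntegral.integral_const_mul, intervalIntegral.integral_ofReal,
    integral_sub_pow_mul_pow_div_factorial]
  push_cast
  ring

lemma hasSum_intervalIntegral_mul_sub {f g : ℝ → ℂ} (ha : ∀ n, ‖a n‖ ≤ R ^ n)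
    (hb : ∀ n, ‖b n‖ ≤ R ^ n) (hf : ∀ x : ℝ, HasSum (fun n => a n * (x : ℂ) ^ n / n !) (f x))
    (hg : ∀ x : ℝ, HasSum (fun n => b n * (x : ℂ) ^ n / n !) (g x)) (s : ℝ) :
    HasSum (fun n => (∑ p ∈ antidiagonal n, a p.1 * b p.2) * (s : ℂ) ^ (n + 1) / (n + 1)!)
      (∫ u in (0 : ℝ)..s, f (s - u) * g u) := by
  have hR := nonneg_of_forall_norm_le_pow ha
  have he : Summable fun n => ‖(R * |s|) ^ n / (n ! : ℝ)‖ := by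
    simpa only [norm_eq_abs] using (summable_pow_div_factorial (R * |s|)).abs
  have hsum := intervalIntegral.hasSum_integral_of_dominated_convergence (μ := volume)
    (a := 0) (b := s) (f := fun u => f (s - u) * g u)
    (F := fun n u => ∑ p ∈ antidiagonal n,
      a p.1 * ((s - u : ℝ) : ℂ) ^ p.1 / p.1 ! * (b p.2 * (u : ℂ) ^ p.2 / p.2 !))
    (fun n _ => ∑ p ∈ antidiagonal n,
      (R * |s|) ^ p.1 / (p.1 ! : ℝ) * ((R * |s|) ^ p.2 / (p.2 ! : ℝ)))
    (fun n => (continuous_finsetSum _ fun p _ => by fun_prop).aestronglyMeasurable)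
    (fun n => Eventually.of_forall fun u hu => by
      obtain ⟨hu, hsu⟩ := abs_le_abs_of_mem_uIoc_zero hu
      refine (norm_sum_le _ _).trans (sum_le_sum fun p _ => ?_)
      rw [norm_mul]
      exact mul_le_mul (norm_mul_pow_div_factorial_le ha hsu _)
        (norm_mul_pow_div_factorial_le hb hu _) (norm_nonneg _) (by positivity))
    (Eventually.of_forall fun _ _ =>
      (summable_norm_sum_mul_antidiagonal_of_summable_norm he he).of_norm)
    intervalIntegrable_const
    (Eventually.of_forall fun u _ => hasSum_sum_antidiagonal_mul_pow_div_factorial ha hb hf hg _ _)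
  refine hsum.congr_fun fun n => ?_
  rw [intervalIntegral.integral_finsetSum
    fun p _ => Continuous.intervalIntegrable (by fun_prop) _ _, sum_mul, sum_div]
  refine sum_congr rfl fun p hp => ?_
  rw [integral_mul_pow_div_factorial_mul, HasAntidiagonal.mem_antidiagonal.mp hp]

lemma hasSum_intervalIntegral_pow_div_factorial {h : ℝ → ℂ} (k : ℕ) (hc : ∀ n, ‖c n‖ ≤ R ^ n)
    (hh : ∀ x : ℝ, HasSum (fun n => c n * (x : ℂ) ^ (n + k) / (n + k)!) (h x)) (t : ℝ) :
    HasSum (fun n => c n * (t : ℂ) ^ (n + k + 1) / (n + k + 1)!) (∫ s in (0 : ℝ)..t, h s) := by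
  have hR := nonneg_of_forall_norm_le_pow hc
  have hsum := intervalIntegral.hasSum_integral_of_dominated_convergence (μ := volume)
    (a := 0) (b := t) (F := fun n x => c n * (x : ℂ) ^ (n + k) / (n + k)!)
    (fun n _ => (R * |t|) ^ n / n ! * |t| ^ k)
    (fun n => (by fun_prop : Continuous _).aestronglyMeasurable)
    (fun n => Eventually.of_forall fun x hx => by
      have hxt := (abs_le_abs_of_mem_uIoc_zero hx).1
      rw [norm_div, norm_mul, norm_pow, Complex.norm_real, Complex.norm_natCast, norm_eq_abs]
      calc ‖c n‖ * |x| ^ (n + k) / (n + k)! ≤ R ^ n * |t| ^ (n + k) / n ! := by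
            gcongr
            exacts [hc n, Nat.le_add_right n k]
        _ = (R * |t|) ^ n / n ! * |t| ^ k := by ring)
    (Eventually.of_forall fun _ _ => (summable_pow_div_factorial _).mul_right _)
    intervalIntegrable_const
    (Eventually.of_forall fun x _ => hh x)
  refine hsum.congr_fun fun n => ?_
  have hcongr : ∀ x : ℝ, c n * (x : ℂ) ^ (n + k) / (n + k)! =
      c n * ((x ^ (n + k) / (n + k)! : ℝ) : ℂ) := fun x => by
    push_cast; ring
  simp_rw [hcongr]
  rw [intervalIntegral.integral_const_mul, intervalIntegral.integral_ofReal,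
    integral_pow_div_factorial]
  push_cast
  ring

end ExpSeries

lemma integral_integral_mono_on {f g : ℝ → ℝ} (hf : Continuous f) (hg : Continuous g) {s : ℝ}
    (hs : 0 ≤ s) (h : ∀ τ ∈ Set.Icc 0 s, f τ ≤ g τ) :
    ∫ σ in (0 : ℝ)..s, ∫ τ in (0 : ℝ)..σ, f τ ≤ ∫ σ in (0 : ℝ)..s, ∫ τ in (0 : ℝ)..σ, g τ := by
  have hprim : ∀ {F : ℝ → ℝ}, Continuous F →
      IntervalIntegrable (fun σ => ∫ τ in (0 : ℝ)..σ, F τ) volume 0 s := fun hF =>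
    (continuous_primitive (fun _ _ => hF.intervalIntegrable _ _) 0).intervalIntegrable _ _
  refine intervalIntegral.integral_mono_on hs (hprim hf) (hprim hg)
    fun σ hσ => intervalIntegral.integral_mono_on hσ.1 (hf.intervalIntegrable _ _)
      (hg.intervalIntegrable _ _) fun τ hτ => h τ ⟨hτ.1, hτ.2.trans hσ.2⟩

lemma tendsto_pow_mul_pow_two_mul_div_factorial {L : ℝ} (hL : 0 ≤ L) (t : ℝ) :
    Tendsto (fun n : ℕ => L ^ n * (t ^ (2 * n) / (2 * n)!)) atTop (𝓝 0) := by
  have h := (FloorSemiring.tendsto_pow_div_factorial_atTop (√L * t)).comp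
    (tendsto_id.const_mul_atTop' two_pos)
  refine h.congr fun n => ?_
  simp only [Function.comp, id, pow_mul, mul_pow, sq_sqrt hL]
  ring

lemma le_zero_of_le_mul_integral_integral {f : ℝ → ℝ} {L : ℝ} (hL : 0 ≤ L) (hf : Continuous f)
    (h : ∀ s ≥ 0, f s ≤ L * ∫ σ in (0 : ℝ)..s, ∫ τ in (0 : ℝ)..σ, f τ) {t : ℝ} (ht : 0 ≤ t) :
    f t ≤ 0 := by
  obtain ⟨A, hA⟩ := (isCompact_Icc (a := 0) (b := t)).exists_bound_of_continuousOn hf.continuousOn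
  have hbound : ∀ n : ℕ, ∀ s ∈ Set.Icc 0 t, f s ≤ A * L ^ n * (s ^ (2 * n) / (2 * n)!) := by
    intro n
    induction n with
    | zero => simpa using fun s hs => (le_abs_self _).trans (hA s hs)
    | succ n ih =>
      intro s hs
      calc f s ≤ L * ∫ σ in (0 : ℝ)..s, ∫ τ in (0 : ℝ)..σ, f τ := h s hs.1
        _ ≤ L * ∫ σ in (0 : ℝ)..s, ∫ τ in (0 : ℝ)..σ, A * L ^ n * (τ ^ (2 * n) / (2 * n)!) := by
          gcongr
          exact integral_integral_mono_on hf (by fun_prop) hs.1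
            fun τ hτ => ih τ ⟨hτ.1, hτ.2.trans hs.2⟩
        _ = A * L ^ (n + 1) * (s ^ (2 * (n + 1)) / (2 * (n + 1))!) := by
          simp only [intervalIntegral.integral_const_mul, integral_pow_div_factorial]
          ring_nf
  have hlim := (tendsto_pow_mul_pow_two_mul_div_factorial hL t).const_mul A
  rw [mul_zero] at hlim
  exact ge_of_tendsto' hlim fun n => by simpa only [mul_assoc] using hbound n t ⟨ht, le_rfl⟩

section Volterra

noncomputable def volterraOp (K f : ℝ → ℂ) (t : ℝ) : ℂ :=
  ∫ s in (0 : ℝ)..t, ∫ s₁ in (0 : ℝ)..s, K (s - s₁) * f s₁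

variable {K f g : ℝ → ℂ}

lemma continuous_integral_mul_sub (hK : Continuous K) (hf : Continuous f) :
    Continuous fun s => ∫ s₁ in (0 : ℝ)..s, K (s - s₁) * f s₁ :=
  (intervalIntegral.continuous_parametric_primitive_of_continuous (μ := volume) (a₀ := 0)
    (f := fun s s₁ => K (s - s₁) * f s₁) (by fun_prop)).comp
    (continuous_id.prodMk continuous_id)

lemma volterraOp_sub_const_mul (hK : Continuous K) (hf : Continuous f) (hg : Continuous g)
    (c : ℂ) (t : ℝ) :
    volterraOp K (fun s => f s - c * g s) t = volterraOp K f t - c * volterraOp K g t := by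
  have hinner : ∀ s, ∫ s₁ in (0 : ℝ)..s, K (s - s₁) * (f s₁ - c * g s₁) =
      (∫ s₁ in (0 : ℝ)..s, K (s - s₁) * f s₁) - c * ∫ s₁ in (0 : ℝ)..s, K (s - s₁) * g s₁ := by
    intro s
    rw [← intervalIntegral.integral_const_mul, ← intervalIntegral.integral_sub
      (Continuous.intervalIntegrable (by fun_prop) _ _)
      (Continuous.intervalIntegrable (by fun_prop) _ _)]
    simp only [mul_sub, mul_left_comm]
  simp only [volterraOp, hinner]
  rw [← intervalIntegral.integral_const_mul, ← intervalIntegral.integral_sub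
    ((continuous_integral_mul_sub hK hf).intervalIntegrable _ _)
    (((continuous_integral_mul_sub hK hg).const_mul c).intervalIntegrable _ _)]

lemma volterraOp_congr (h : Set.EqOn f g (Set.Ici 0)) {t : ℝ} (ht : 0 ≤ t) :
    volterraOp K f t = volterraOp K g t := by
  refine intervalIntegral.integral_congr fun s hs =>
    intervalIntegral.integral_congr fun s₁ hs₁ => ?_
  rw [Set.uIcc_of_le ht] at hs
  rw [Set.uIcc_of_le hs.1] at hs₁
  simp only [h hs₁.1]

lemma norm_volterraOp_le {M : ℝ} (hK : ∀ x, ‖K x‖ ≤ M) (hf : Continuous f) {t : ℝ}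
    (ht : 0 ≤ t) :
    ‖volterraOp K f t‖ ≤ M * ∫ s in (0 : ℝ)..t, ∫ s₁ in (0 : ℝ)..s, ‖f s₁‖ := by
  have hprim : Continuous fun s => ∫ s₁ in (0 : ℝ)..s, ‖f s₁‖ :=
    intervalIntegral.continuous_primitive (fun _ _ => hf.norm.intervalIntegrable _ _) 0
  rw [← intervalIntegral.integral_const_mul]
  refine intervalIntegral.norm_integral_le_of_norm_le ht (Eventually.of_forall fun s hs => ?_)
    ((hprim.const_mul M).intervalIntegrable _ _)
  rw [← intervalIntegral.integral_const_mul]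
  refine intervalIntegral.norm_integral_le_of_norm_le hs.1.le
    (Eventually.of_forall fun s₁ _ => ?_) ((hf.norm.const_mul M).intervalIntegrable _ _)
  rw [norm_mul]
  exact mul_le_mul_of_nonneg_right (hK _) (norm_nonneg _)

lemma eq_zero_of_add_mul_volterraOp_eq_zero {K u : ℝ → ℂ} {M : ℝ} (hK : ∀ x, ‖K x‖ ≤ M)
    (hu : Continuous u) (μ : ℂ) (h : ∀ s ≥ 0, u s + μ * volterraOp K u s = 0) {t : ℝ}
    (ht : 0 ≤ t) : u t = 0 := by
  have hM : 0 ≤ M := (norm_nonneg _).trans (hK 0)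
  refine norm_le_zero_iff.mp (le_zero_of_le_mul_integral_integral (mul_nonneg (norm_nonneg μ) hM)
    hu.norm (fun s hs => ?_) ht)
  rw [eq_neg_of_add_eq_zero_left (h s hs), norm_neg, norm_mul, mul_assoc]
  exact mul_le_mul_of_nonneg_left (norm_volterraOp_le hK hu hs) (norm_nonneg μ)

end Volterra

lemma continuous_vSC (w : ℝ) : Continuous (vSC w) := by
  have := continuous_rhoSC w
  exact intervalIntegral.continuous_parametric_intervalIntegral_of_continuous' (by fun_prop) _ _

lemma norm_vSC_le_one {w : ℝ} (hw : 0 < w) (t : ℝ) : ‖vSC w t‖ ≤ 1 := by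
  have hint : ∫ x in (-(2 * w))..(2 * w), rhoSC w x = 1 := by
    simpa [mSC] using mSC_zero hw
  calc ‖vSC w t‖ ≤ ∫ x in (-(2 * w))..(2 * w), rhoSC w x :=
        intervalIntegral.norm_integral_le_of_norm_le (by linarith)
          (Eventually.of_forall fun x _ => by
            rw [norm_mul, show Complex.I * t * x = ((t * x : ℝ) : ℂ) * Complex.I by push_cast; ring,
              Complex.norm_exp_ofReal_mul_I, one_mul, Complex.norm_real,
              norm_of_nonneg (rhoSC_nonneg w x)])
          ((continuous_rhoSC w).intervalIntegrable _ _)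
    _ = 1 := hint

lemma hasSum_vSC {w : ℝ} (hw : 0 < w) (t : ℝ) :
    HasSum (fun n => Complex.I ^ n * mSC w n * (t : ℂ) ^ n / (n ! : ℂ)) (vSC w t) := by
  have hρ := continuous_rhoSC w
  have hsum := intervalIntegral.hasSum_integral_of_dominated_convergence (μ := volume)
    (a := -(2 * w)) (b := 2 * w) (f := fun x => Complex.exp (Complex.I * t * x) * (rhoSC w x : ℂ))
    (F := fun n x => (Complex.I * t * x) ^ n / (n ! : ℂ) * (rhoSC w x : ℂ))
    (fun n x => (|t| * (2 * w)) ^ n / (n ! : ℝ) * rhoSC w x)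
    (fun n => (by fun_prop : Continuous _).aestronglyMeasurable)
    (fun n => Eventually.of_forall fun x hx => by
      have hx : |x| ≤ 2 * w := by
        rw [Set.uIoc_of_le (by linarith)] at hx
        exact abs_le.mpr ⟨hx.1.le, hx.2⟩
      rw [norm_mul, norm_div, norm_pow, Complex.norm_real, Complex.norm_natCast, norm_mul,
        norm_mul, Complex.norm_I, Complex.norm_real, Complex.norm_real, norm_eq_abs, norm_eq_abs,
        norm_of_nonneg (rhoSC_nonneg w x), one_mul]
      gcongr
      exact rhoSC_nonneg w x)
    (Eventually.of_forall fun _ _ => (summable_pow_div_factorial _).mul_right _)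
    (by simp_rw [tsum_mul_right]; exact (hρ.const_mul _).intervalIntegrable _ _)
    (Eventually.of_forall fun x _ => by
      rw [Complex.exp_eq_exp_ℂ]
      exact (NormedSpace.expSeries_div_hasSum_exp (Complex.I * t * x)).mul_right (rhoSC w x : ℂ))
  refine hsum.congr_fun fun n => ?_
  have hcongr : ∀ x : ℝ, (Complex.I * t * x) ^ n / (n ! : ℂ) * (rhoSC w x : ℂ) =
      Complex.I ^ n * (t : ℂ) ^ n / (n ! : ℂ) * ((x ^ n * rhoSC w x : ℝ) : ℂ) := fun x => by
    push_cast; ring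
  simp_rw [hcongr]
  rw [intervalIntegral.integral_const_mul, intervalIntegral.integral_ofReal, ← mSC]
  ring

lemma norm_I_pow_mul_mSC_le {w : ℝ} (hw : 0 < w) (n : ℕ) :
    ‖Complex.I ^ n * mSC w n‖ ≤ (2 * w) ^ n := by
  simpa using abs_mSC_le hw n

lemma sq_mul_sum_antidiagonal_I_pow_mul_mSC {w : ℝ} (hw : 0 < w) (n : ℕ) :
    (w : ℂ) ^ 2 *
        ∑ p ∈ antidiagonal n, Complex.I ^ p.1 * mSC w p.1 * (Complex.I ^ p.2 * mSC w p.2) =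
      -(Complex.I ^ (n + 2) * mSC w (n + 2)) := by
  have hterm : ∀ p ∈ antidiagonal n, Complex.I ^ p.1 * mSC w p.1 * (Complex.I ^ p.2 * mSC w p.2) =
      Complex.I ^ n * ((mSC w p.1 * mSC w p.2 : ℝ) : ℂ) := fun p hp => by
    rw [← HasAntidiagonal.mem_antidiagonal.mp hp, pow_add]
    push_cast
    ring
  rw [sum_congr rfl hterm, ← mul_sum, mSC_add_two_eq_sum hw, pow_add, Complex.I_sq]
  push_cast
  ring

lemma vSC_add_mul_volterraOp_self {w : ℝ} (hw : 0 < w) (t : ℝ) :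
    vSC w t + (w : ℂ) ^ 2 * volterraOp (vSC w) (vSC w) t = 1 := by
  have hcoeff := norm_I_pow_mul_mSC_le hw
  have hconv := hasSum_intervalIntegral_mul_sub hcoeff hcoeff (hasSum_vSC hw) (hasSum_vSC hw)
  have hint := hasSum_intervalIntegral_pow_div_factorial 1
    (norm_sum_antidiagonal_mul_le hcoeff hcoeff) hconv t
  have hneg : HasSum (fun n => -(Complex.I ^ (n + 2) * mSC w (n + 2) * (t : ℂ) ^ (n + 2) /
      ((n + 2)! : ℂ))) ((w : ℂ) ^ 2 * volterraOp (vSC w) (vSC w) t) := by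
    refine (hint.mul_left _).congr_fun fun n => ?_
    linear_combination
      (-((t : ℂ) ^ (n + 2) / ((n + 2)! : ℂ))) * sq_mul_sum_antidiagonal_I_pow_mul_mSC hw n
  have hhead : ∑ n ∈ range 2, Complex.I ^ n * mSC w n * (t : ℂ) ^ n / (n ! : ℂ) = 1 := by
    simp [sum_range_succ, mSC_zero hw, mSC_one hw]
  have htail := (hasSum_nat_add_iff' 2).mpr (hasSum_vSC hw t)
  rw [hhead] at htail
  linear_combination -htail.neg.unique hneg

/-- The unique differentiable solution of the Volterra equation
`v₂(t) + w² ∫₀ᵗ∫₀ˢ v(s−s₁) v₂(s₁) ds₁ ds = c` is `v₂ = c·v`. -/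
theorem volterra_semicircle_solution (w : ℝ) (hw : 0 < w) (c : ℂ) (v₂ : ℝ → ℂ)
    (hd : DifferentiableOn ℝ v₂ (Set.Ici 0))
    (heq : ∀ t ≥ (0:ℝ),
      v₂ t + (w : ℂ) ^ 2 *
        ∫ s in (0:ℝ)..t, ∫ s₁ in (0:ℝ)..s, vSC w (s - s₁) * v₂ s₁ = c) :
    ∀ t ≥ (0:ℝ), v₂ t = c * vSC w t := by
  -- the lemmas on `volterraOp` need a function continuous on all of `ℝ`
  set g : ℝ → ℂ := fun s => v₂ (max s 0)
  have hg : Continuous g := hd.continuousOn.comp_continuous (continuous_id.max continuous_const)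
    fun s => le_max_right s 0
  have hgv : Set.EqOn g v₂ (Set.Ici 0) := fun s hs => by
    simp only [g, max_eq_left (Set.mem_Ici.mp hs)]
  have hv := continuous_vSC w
  have hdiff : ∀ s ≥ 0, (g s - c * vSC w s) +
      (w : ℂ) ^ 2 * volterraOp (vSC w) (fun s => g s - c * vSC w s) s = 0 := by
    intro s hs
    have hv₂ : v₂ s + (w : ℂ) ^ 2 * volterraOp (vSC w) v₂ s = c := heq s hs
    rw [volterraOp_sub_const_mul hv hg hv, volterraOp_congr hgv hs, hgv hs]
    linear_combination hv₂ - c * vSC_add_mul_volterraOp_self hw s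
  intro t ht
  rw [← hgv ht]
  exact sub_eq_zero.mp (eq_zero_of_add_mul_volterraOp_eq_zero (norm_vSC_le_one hw)
    (hg.sub (continuous_const.mul hv)) _ hdiff ht)
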